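/- Let η be a set of AICs and D a database. For every r-update U ∈ Ups(D,η), U is grounded if and only if U ∈ Ups(D, η[U]), where η[U] is the set of ground AICs obtained from gr_D(η) by deleting from each head every update action not occurring in U and then deleting the AICs whose heads have become empty. -/
import Mathlib


namespace PR

/-! ### Basic syntax: constants, variables, terms, atoms, facts, schemas -/

abbrev Const := ℕ
abbrev Var := ℕ

inductive Term where
  | const (c : Const)
  | var (v : Var)
deriving DecidableEq

structure Atom where
  pred : ℕ
  args : List Term
deriving DecidableEq

structure Fact where
  pred : ℕ
  args : List Const
deriving DecidableEq

structure Schema where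
  preds : Finset ℕ
  arity : ℕ → ℕ

/-- A database is a set of facts (finiteness is required via `DBwf`). -/
abbrev DB := Set Fact

def Fact.wf (S : Schema) (f : Fact) : Prop :=
  f.pred ∈ S.preds ∧ f.args.length = S.arity f.pred

/-- `D` is a (finite) database over schema `S`. -/
def DBwf (S : Schema) (D : DB) : Prop :=
  D.Finite ∧ ∀ f ∈ D, f.wf S

/-- Active domain of a database. -/
def adom (D : DB) : Set Const := {c | ∃ f ∈ D, c ∈ f.args}

def Term.eval (ν : Var → Const) : Term → Const
  | .const c => c
  | .var v => ν v

def Term.varSet : Term → Set Var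
  | .const _ => ∅
  | .var v => {v}

def Atom.ground (ν : Var → Const) (a : Atom) : Fact :=
  ⟨a.pred, a.args.map (Term.eval ν)⟩

def Atom.vars (a : Atom) : Set Var := {v | Term.var v ∈ a.args}

def Atom.wf (S : Schema) (a : Atom) : Prop :=
  a.pred ∈ S.preds ∧ a.args.length = S.arity a.pred

/-! ### Universal constraints -/

/-- A universal constraint `∀ x̄ (pos ∧ ¬neg ∧ ineq → ⊥)`. -/
structure UC where
  pos : List Atom
  neg : List Atom
  ineq : List (Term × Term)
deriving DecidableEq

def UC.vars (τ : UC) : Set Var :=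
  {v | (∃ a ∈ τ.pos, v ∈ a.vars) ∨ (∃ a ∈ τ.neg, v ∈ a.vars) ∨
       (∃ p ∈ τ.ineq, v ∈ p.1.varSet ∨ v ∈ p.2.varSet)}

/-- Well-formedness over `S`, including the safety condition. -/
def UC.wf (S : Schema) (τ : UC) : Prop :=
  (∀ a ∈ τ.pos, a.wf S) ∧ (∀ a ∈ τ.neg, a.wf S) ∧
  (∀ a ∈ τ.neg, ∀ v ∈ a.vars, ∃ b ∈ τ.pos, v ∈ b.vars) ∧
  (∀ p ∈ τ.ineq, ∀ v, (v ∈ p.1.varSet ∨ v ∈ p.2.varSet) → ∃ b ∈ τ.pos, v ∈ b.vars)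

/-- A valuation (over the active domain of `D`) witnessing a violation of `τ` in `D`. -/
def UC.violation (τ : UC) (D : DB) (ν : Var → Const) : Prop :=
  (∀ v ∈ τ.vars, ν v ∈ adom D) ∧
  (∀ a ∈ τ.pos, a.ground ν ∈ D) ∧
  (∀ a ∈ τ.neg, a.ground ν ∉ D) ∧
  (∀ p ∈ τ.ineq, p.1.eval ν ≠ p.2.eval ν)

/-- `D ⊨ τ`. -/
def UC.holds (τ : UC) (D : DB) : Prop := ¬ ∃ ν, τ.violation D ν

/-- `D ⊨ C`. -/
def satC (D : DB) (C : Set UC) : Prop := ∀ τ ∈ C, τ.holds D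

/-- A denial constraint has no negated relational atoms. -/
def UC.denial (τ : UC) : Prop := τ.neg = []

/-! ### Δ-repairs -/

/-- Symmetric-difference repairs of `D` w.r.t. `C`. -/
def DRep (S : Schema) (D : DB) (C : Set UC) : Set DB :=
  {R | DBwf S R ∧ satC R C ∧
       ¬ ∃ R', DBwf S R' ∧ satC R' C ∧ symmDiff R' D ⊂ symmDiff R D}

/-- `Facts(D)`: facts over `S` with constants from `adom D`. -/
def FactsOf (S : Schema) (D : DB) : Set Fact :=
  {f | f.wf S ∧ ∀ c ∈ f.args, c ∈ adom D}

/-! ### Literals and conflicts -/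

inductive Lit where
  | pos (f : Fact)
  | neg (f : Fact)
deriving DecidableEq

/-- `Lits(D) = D ∪ {¬α | α ∈ Facts(D) \ D}`. -/
def LitsOf (S : Schema) (D : DB) : Set Lit :=
  Lit.pos '' D ∪ Lit.neg '' (FactsOf S D \ D)

/-- `I ⊨ E` for a set of literals `E`. -/
def satLits (I : DB) (E : Set Lit) : Prop :=
  (∀ f, Lit.pos f ∈ E → f ∈ I) ∧ (∀ f, Lit.neg f ∈ E → f ∉ I)

/-- `E` is a set of literals of `D` that necessarily leads to a constraint violation. -/
def confProp (S : Schema) (D : DB) (C : Set UC) (E : Set Lit) : Prop :=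
  E ⊆ LitsOf S D ∧ ∀ I : DB, DBwf S I → satLits I E → ¬ satC I C

/-- `Conf(D,C)`: the conflicts of `D` w.r.t. `C`. -/
def Conf (S : Schema) (D : DB) (C : Set UC) : Set (Set Lit) :=
  {E | confProp S D C E ∧ ∀ E', E' ⊂ E → ¬ confProp S D C E'}

/-! ### Hitting sets -/

def HitsAll (F : Set (Set Fact)) (H : Set Fact) : Prop := ∀ X ∈ F, (H ∩ X).Nonempty

def MinHS (F : Set (Set Fact)) (H : Set Fact) : Prop :=
  HitsAll F H ∧ ∀ H', H' ⊂ H → ¬ HitsAll F H'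

/-- `MHS(D,C)`: minimal hitting sets of the symmetric differences of the Δ-repairs with `D`. -/
def MHS (S : Schema) (D : DB) (C : Set UC) : Set (Set Fact) :=
  {H | MinHS {X | ∃ R ∈ DRep S D C, X = symmDiff R D} H}

/-! ### Candidate repairs, `comp` and `restr` -/

/-- `comp_D(B)`: the set of literals of `D` on which `B` and `D` agree. -/
def compD (S : Schema) (D B : DB) : Set Lit :=
  Lit.pos '' (B ∩ D) ∪ Lit.neg '' (FactsOf S D \ (B ∪ D))

/-- `restr_D(B)` for `B ⊆ Lits(D)`. -/
def restrD (S : Schema) (D : DB) (B : Set Lit) : DB :=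
  {f | Lit.pos f ∈ B ∧ f ∈ D} ∪ {f | Lit.neg f ∈ LitsOf S D ∧ Lit.neg f ∉ B}

/-! ### Ground constraints, groundings and prime implicants -/

/-- A ground (denial-shaped) constraint body: positive and negative facts. -/
structure GC where
  pos : Set Fact
  neg : Set Fact

/-- `gr_D(τ)`. -/
def grUC (D : DB) (τ : UC) : Set GC :=
  {g | ∃ ν : Var → Const, (∀ v ∈ τ.vars, ν v ∈ adom D) ∧
        (∀ p ∈ τ.ineq, p.1.eval ν ≠ p.2.eval ν) ∧
        g = ⟨Atom.ground ν '' {a | a ∈ τ.pos}, Atom.ground ν '' {a | a ∈ τ.neg}⟩}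

/-- `gr_D(C)`. -/
def grCset (D : DB) (C : Set UC) : Set GC := ⋃ τ ∈ C, grUC D τ

/-- `I` satisfies the body of a ground constraint. -/
def GC.bodySat (g : GC) (I : DB) : Prop := g.pos ⊆ I ∧ ∀ f ∈ g.neg, f ∉ I

/-- `E` entails the disjunction `⋁_{φ→⊥ ∈ gr_D(C)} φ` (literals as propositional literals). -/
def implicant (D : DB) (C : Set UC) (E : Set Lit) : Prop :=
  ∀ I : DB, satLits I E → ∃ g ∈ grCset D C, g.bodySat I

/-- `⋀ E` is a prime implicant of `⋁_{φ→⊥ ∈ gr_D(C)} φ`. -/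
def primeImplicant (D : DB) (C : Set UC) (E : Set Lit) : Prop :=
  implicant D C E ∧ ∀ E', E' ⊂ E → ¬ implicant D C E'

/-! ### Conflict hypergraph -/

def confVerts (S : Schema) (D : DB) (C : Set UC) : Set Lit := ⋃₀ Conf S D C

def indepSet (S : Schema) (D : DB) (C : Set UC) (M : Set Lit) : Prop :=
  M ⊆ confVerts S D C ∧ ∀ E ∈ Conf S D C, ¬ E ⊆ M

def maxIndepSet (S : Schema) (D : DB) (C : Set UC) (M : Set Lit) : Prop :=
  indepSet S D C M ∧ ∀ M', M ⊂ M' → ¬ indepSet S D C M'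

/-! ### Priorities and optimal repairs -/

def Acyclic (P : Lit → Lit → Prop) : Prop := ∀ l, ¬ Relation.TransGen P l l

/-- `P` is a priority relation for `D` w.r.t. `C`. -/
def isPriority (S : Schema) (D : DB) (C : Set UC) (P : Lit → Lit → Prop) : Prop :=
  Acyclic P ∧ ∀ l m, P l m → ∃ E ∈ Conf S D C, l ∈ E ∧ m ∈ E

def isTotalPriority (S : Schema) (D : DB) (C : Set UC) (P : Lit → Lit → Prop) : Prop :=
  isPriority S D C P ∧
  ∀ l m, l ≠ m → (∃ E ∈ Conf S D C, l ∈ E ∧ m ∈ E) → (P l m ∨ P m l)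

/-- `B` is a Pareto improvement of `R`. -/
def ParetoImp (S : Schema) (D : DB) (C : Set UC) (P : Lit → Lit → Prop) (R B : DB) : Prop :=
  DBwf S B ∧ satC B C ∧
  ∃ μ ∈ compD S D B \ compD S D R, ∀ l ∈ compD S D R \ compD S D B, P μ l

/-- `B` is a global improvement of `R`. -/
def GlobalImp (S : Schema) (D : DB) (C : Set UC) (P : Lit → Lit → Prop) (R B : DB) : Prop :=
  DBwf S B ∧ satC B C ∧ compD S D B ≠ compD S D R ∧
  ∀ l ∈ compD S D R \ compD S D B, ∃ μ ∈ compD S D B \ compD S D R, P μ l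

/-- Pareto-optimal Δ-repairs. -/
def PRep (S : Schema) (D : DB) (C : Set UC) (P : Lit → Lit → Prop) : Set DB :=
  {R ∈ DRep S D C | ¬ ∃ B, ParetoImp S D C P R B}

/-- Globally-optimal Δ-repairs. -/
def GRep (S : Schema) (D : DB) (C : Set UC) (P : Lit → Lit → Prop) : Set DB :=
  {R ∈ DRep S D C | ¬ ∃ B, GlobalImp S D C P R B}

/-- Completion-optimal Δ-repairs. -/
def CRep (S : Schema) (D : DB) (C : Set UC) (P : Lit → Lit → Prop) : Set DB :=
  {R | ∃ P' : Lit → Lit → Prop, isTotalPriority S D C P' ∧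
        (∀ l m, P l m → P' l m) ∧ R ∈ GRep S D C P'}

/-- Δ_P-repairs, for a score-structured priority with scoring function `s`. -/
def DeltaPRep (S : Schema) (D : DB) (C : Set UC) (s : Lit → ℕ) : Set DB :=
  {R | R ⊆ FactsOf S D ∧ satC R C ∧
    ¬ ∃ R' : DB, DBwf S R' ∧ satC R' C ∧ ∃ k : ℕ,
      (compD S D R ∩ {l ∈ ⋃₀ Conf S D C | s l = k}
          ⊂ compD S D R' ∩ {l ∈ ⋃₀ Conf S D C | s l = k}) ∧
      ∀ k', k < k' →
        compD S D R ∩ {l ∈ ⋃₀ Conf S D C | s l = k'}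
          = compD S D R' ∩ {l ∈ ⋃₀ Conf S D C | s l = k'}}

/-! ### Update actions and active integrity constraints -/

inductive UAct where
  | add (f : Fact)
  | del (f : Fact)
deriving DecidableEq

def Lit.fix : Lit → UAct
  | .pos f => .del f
  | .neg f => .add f

def consistentU (U : Set UAct) : Prop := ¬ ∃ f, UAct.add f ∈ U ∧ UAct.del f ∈ U

/-- `D ∘ U`. -/
def applyU (D : DB) (U : Set UAct) : DB :=
  (D \ {f | UAct.del f ∈ U}) ∪ {f | UAct.add f ∈ U}

/-- An active integrity constraint: a constraint body together with updatable atoms. -/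
structure AIC where
  pos : List Atom
  neg : List Atom
  ineq : List (Term × Term)
  updPos : List Atom
  updNeg : List Atom
deriving DecidableEq

def AIC.toUC (r : AIC) : UC := ⟨r.pos, r.neg, r.ineq⟩

def AIC.wf (S : Schema) (r : AIC) : Prop :=
  r.toUC.wf S ∧ (∀ a ∈ r.updPos, a ∈ r.pos) ∧ (∀ a ∈ r.updNeg, a ∈ r.neg) ∧
  (r.updPos ≠ [] ∨ r.updNeg ≠ [])

/-- A ground AIC. -/
structure GAIC where
  pos : Set Fact
  neg : Set Fact
  updPos : Set Fact
  updNeg : Set Fact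

def GAIC.wf (S : Schema) (g : GAIC) : Prop :=
  g.pos.Finite ∧ g.neg.Finite ∧ (∀ f ∈ g.pos ∪ g.neg, f.wf S) ∧
  g.updPos ⊆ g.pos ∧ g.updNeg ⊆ g.neg ∧ (g.updPos ∪ g.updNeg).Nonempty

/-- `D ⊨ g` for a ground AIC `g`. -/
def GAIC.holds (g : GAIC) (D : DB) : Prop := ¬ (g.pos ⊆ D ∧ ∀ f ∈ g.neg, f ∉ D)

def GAIC.upd (g : GAIC) : Set UAct := UAct.del '' g.updPos ∪ UAct.add '' g.updNeg

def GAIC.lits (g : GAIC) : Set Lit := Lit.pos '' g.pos ∪ Lit.neg '' g.neg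

def AIC.groundAt (r : AIC) (ν : Var → Const) : GAIC :=
  ⟨Atom.ground ν '' {a | a ∈ r.pos}, Atom.ground ν '' {a | a ∈ r.neg},
   Atom.ground ν '' {a | a ∈ r.updPos}, Atom.ground ν '' {a | a ∈ r.updNeg}⟩

/-- `gr_D(η)` for a set of AICs. -/
def grD (D : DB) (η : Set AIC) : Set GAIC :=
  {g | ∃ r ∈ η, ∃ ν : Var → Const, (∀ v ∈ r.toUC.vars, ν v ∈ adom D) ∧
        (∀ p ∈ r.ineq, p.1.eval ν ≠ p.2.eval ν) ∧ g = r.groundAt ν}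

def satG (D : DB) (G : Set GAIC) : Prop := ∀ g ∈ G, g.holds D

def satA (D : DB) (η : Set AIC) : Prop := ∀ r ∈ η, r.toUC.holds D

/-- r-updates w.r.t. a set of ground AICs. -/
def UpsG (D : DB) (G : Set GAIC) : Set (Set UAct) :=
  {U | consistentU U ∧ satG (applyU D U) G ∧ ∀ V, V ⊂ U → ¬ satG (applyU D V) G}

/-- r-updates w.r.t. a set of AICs. -/
def UpsA (D : DB) (η : Set AIC) : Set (Set UAct) :=
  {U | consistentU U ∧ satA (applyU D U) η ∧ ∀ V, V ⊂ U → ¬ satA (applyU D V) η}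

/-- Normalization of a set of ground AICs. -/
def NormG (G : Set GAIC) : Set GAIC :=
  {g' | ∃ g ∈ G, (∃ f ∈ g.updPos, g' = ⟨g.pos, g.neg, {f}, ∅⟩) ∨
                 (∃ f ∈ g.updNeg, g' = ⟨g.pos, g.neg, ∅, {f}⟩)}

/-! #### founded / well-founded / grounded / justified r-updates (ground AIC sets) -/

def FoundedG (D : DB) (G : Set GAIC) (U : Set UAct) : Prop :=
  U ∈ UpsG D G ∧ ∀ A ∈ U, ∃ g ∈ G, A ∈ g.upd ∧ ¬ g.holds (applyU D (U \ {A}))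

def WellFoundedG (D : DB) (G : Set GAIC) (U : Set UAct) : Prop :=
  U ∈ UpsG D G ∧ ∃ L : List UAct, L.Nodup ∧ U = {A | A ∈ L} ∧
    ∀ i : Fin L.length, ∃ g ∈ G, L.get i ∈ g.upd ∧
      ¬ g.holds (applyU D {A | A ∈ L.take i.1})

def GroundedG (D : DB) (G : Set GAIC) (U : Set UAct) : Prop :=
  U ∈ UpsG D G ∧ ∀ V, V ⊂ U →
    ∃ g ∈ NormG G, ¬ g.holds (applyU D V) ∧ g.upd ⊆ U \ V

/-- `ne(D, R)`: the no-effect actions. -/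
def neAct (S : Schema) (D R : DB) : Set UAct :=
  UAct.add '' (D ∩ R) ∪ UAct.del '' {f | f ∈ FactsOf S D ∧ f ∉ D ∧ f ∉ R}

/-- `W` is closed under the ground AICs `G`. -/
def closedUnder (W : Set UAct) (G : Set GAIC) : Prop :=
  ∀ g ∈ G, ((∀ f ∈ g.pos \ g.updPos, UAct.add f ∈ W) ∧
            (∀ f ∈ g.neg \ g.updNeg, UAct.del f ∈ W)) → (W ∩ g.upd).Nonempty

def JustifiedG (S : Schema) (D : DB) (G : Set GAIC) (U : Set UAct) : Prop :=
  U ∈ UpsG D G ∧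
  closedUnder (neAct S D (applyU D U) ∪ U) G ∧
  ∀ W, neAct S D (applyU D U) ⊆ W → W ⊂ neAct S D (applyU D U) ∪ U → ¬ closedUnder W G

def FoundRepG (D : DB) (G : Set GAIC) : Set DB := {R | ∃ U, FoundedG D G U ∧ R = applyU D U}
def WellFoundRepG (D : DB) (G : Set GAIC) : Set DB := {R | ∃ U, WellFoundedG D G U ∧ R = applyU D U}
def GroundRepG (D : DB) (G : Set GAIC) : Set DB := {R | ∃ U, GroundedG D G U ∧ R = applyU D U}
def JustRepG (S : Schema) (D : DB) (G : Set GAIC) : Set DB := {R | ∃ U, JustifiedG S D G U ∧ R = applyU D U}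

/-! #### founded / well-founded / grounded / justified r-updates (general AIC sets) -/

def FoundedA (D : DB) (η : Set AIC) (U : Set UAct) : Prop :=
  U ∈ UpsA D η ∧ ∀ A ∈ U, ∃ g ∈ grD D η, A ∈ g.upd ∧ ¬ g.holds (applyU D (U \ {A}))

def WellFoundedA (D : DB) (η : Set AIC) (U : Set UAct) : Prop :=
  U ∈ UpsA D η ∧ ∃ L : List UAct, L.Nodup ∧ U = {A | A ∈ L} ∧
    ∀ i : Fin L.length, ∃ g ∈ grD D η, L.get i ∈ g.upd ∧
      ¬ g.holds (applyU D {A | A ∈ L.take i.1})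

def GroundedA (D : DB) (η : Set AIC) (U : Set UAct) : Prop :=
  U ∈ UpsA D η ∧ ∀ V, V ⊂ U →
    ∃ g ∈ NormG (grD D η), ¬ g.holds (applyU D V) ∧ g.upd ⊆ U \ V

def JustifiedA (S : Schema) (D : DB) (η : Set AIC) (U : Set UAct) : Prop :=
  U ∈ UpsA D η ∧
  closedUnder (neAct S D (applyU D U) ∪ U) (grD D η) ∧
  ∀ W, neAct S D (applyU D U) ⊆ W → W ⊂ neAct S D (applyU D U) ∪ U →
    ¬ closedUnder W (grD D η)

def FoundRepA (D : DB) (η : Set AIC) : Set DB := {R | ∃ U, FoundedA D η U ∧ R = applyU D U}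
def WellFoundRepA (D : DB) (η : Set AIC) : Set DB := {R | ∃ U, WellFoundedA D η U ∧ R = applyU D U}
def GroundRepA (D : DB) (η : Set AIC) : Set DB := {R | ∃ U, GroundedA D η U ∧ R = applyU D U}
def JustRepA (S : Schema) (D : DB) (η : Set AIC) : Set DB := {R | ∃ U, JustifiedA S D η U ∧ R = applyU D U}

/-- The set of universal constraints corresponding to a set of AICs. -/
def CofEta (η : Set AIC) : Set UC := AIC.toUC '' η

/-! ### η[U] (Calautti et al. characterization of grounded r-updates) -/

def restrictG (G : Set GAIC) (U : Set UAct) : Set GAIC :=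
  {g' | ∃ g ∈ G,
      g' = ⟨g.pos, g.neg, {f | f ∈ g.updPos ∧ UAct.del f ∈ U},
            {f | f ∈ g.updNeg ∧ UAct.add f ∈ U}⟩ ∧
      g'.upd.Nonempty}

/-! ### From prioritized databases to ground AICs -/

/-- The AIC `r_E` associated with a conflict `E` and priority `P`. -/
def aicOfConf (P : Lit → Lit → Prop) (E : Set Lit) : GAIC :=
  ⟨{f | Lit.pos f ∈ E}, {f | Lit.neg f ∈ E},
   {f | Lit.pos f ∈ E ∧ ∀ μ ∈ E, ¬ P (Lit.pos f) μ},
   {f | Lit.neg f ∈ E ∧ ∀ μ ∈ E, ¬ P (Lit.neg f) μ}⟩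

/-- `η^C_≻`. -/
def etaOf (S : Schema) (D : DB) (C : Set UC) (P : Lit → Lit → Prop) : Set GAIC :=
  {g | ∃ E ∈ Conf S D C, g = aicOfConf P E}

/-! ### Well-behaved classes of AICs -/

/-- No fact occurs both positively and negatively in bodies of `G`. -/
def monotoneG (G : Set GAIC) : Prop :=
  ¬ ∃ f, (∃ g ∈ G, f ∈ g.pos) ∧ (∃ g ∈ G, f ∈ g.neg)

def litsConsistent (L : Set Lit) : Prop := ¬ ∃ f, Lit.pos f ∈ L ∧ Lit.neg f ∈ L

def closedUnderRes (G : Set GAIC) : Prop :=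
  (∃ D : DB, D.Finite ∧ satG D G) ∧
  ∀ g1 ∈ G, ∀ g2 ∈ G, ∀ f : Fact,
    Lit.pos f ∈ g1.lits → Lit.neg f ∈ g2.lits →
    litsConsistent ((g1.lits ∪ g2.lits) \ {Lit.pos f, Lit.neg f}) →
    ∃ g3 ∈ G, g3.lits = (g1.lits ∪ g2.lits) \ {Lit.pos f, Lit.neg f}

def presActRes (G : Set GAIC) : Prop :=
  ∀ g1 ∈ G, ∀ g2 ∈ G, ∀ g3 ∈ G, ∀ f : Fact,
    Lit.pos f ∈ g1.lits → Lit.neg f ∈ g2.lits →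
    g3.lits = (g1.lits ∪ g2.lits) \ {Lit.pos f, Lit.neg f} →
    (g1.upd ∪ g2.upd) \ {UAct.add f, UAct.del f} ⊆ g3.upd

def sameBody (g g' : GAIC) : Prop := g.pos = g'.pos ∧ g.neg = g'.neg

/-- Anti-normalization of a set of ground AICs. -/
def ANg (G : Set GAIC) : Set GAIC :=
  {g' | (∃ g ∈ G, sameBody g g') ∧
        g'.updPos = {f | ∃ g ∈ G, sameBody g g' ∧ f ∈ g.updPos} ∧
        g'.updNeg = {f | ∃ g ∈ G, sameBody g g' ∧ f ∈ g.updNeg}}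

def presActStr (G : Set GAIC) : Prop :=
  ∀ g1 ∈ ANg G, ∀ g2 ∈ ANg G, g1.lits ⊆ g2.lits → g2.upd ⊆ g1.upd

/-- `min(η)`: AICs of `AN(η)` with ⊆-minimal sets of body literals. -/
def minAN (G : Set GAIC) : Set GAIC :=
  {g ∈ ANg G | ¬ ∃ g' ∈ ANg G, g'.lits ⊂ g.lits}

/-- `min_g(η)`: the body-minimal ground instances of `η` over `D`. -/
def minGr (D : DB) (η : Set AIC) : Set GAIC :=
  {g ∈ grD D η | ¬ ∃ g' ∈ grD D η, g'.lits ⊂ g.lits}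

/-- The relation `≻_η` extracted from a set of AICs. -/
def prioOf (D : DB) (η : Set AIC) : Lit → Lit → Prop := fun l m =>
  (∃ g ∈ minGr D η, ¬ g.holds D ∧ l ∈ g.lits ∧ m ∈ g.lits ∧ m.fix ∈ g.upd) ∧
  (∀ g ∈ minGr D η, ¬ g.holds D → l ∈ g.lits → m ∈ g.lits → l.fix ∉ g.upd)

/-! ### Reduction to denial constraints (tilde predicates) -/

/-- Lifted schema `S' = S ∪ {P̃ | P ∈ S}`, encoding `P` as `2P` and `P̃` as `2P+1`. -/
def liftSchema (S : Schema) : Schema :=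
  ⟨S.preds.image (fun p => 2 * p) ∪ S.preds.image (fun p => 2 * p + 1),
   fun n => S.arity (n / 2)⟩

/-- `facts`: replace positive literals by facts over the `P`-copies and negative
literals by facts over the fresh `P̃`-copies. -/
def factsMap (L : Set Lit) : Set Fact :=
  {g | (∃ f, Lit.pos f ∈ L ∧ g = ⟨2 * f.pred, f.args⟩) ∨
       (∃ f, Lit.neg f ∈ L ∧ g = ⟨2 * f.pred + 1, f.args⟩)}

def Fact.toAtom (f : Fact) : Atom := ⟨f.pred, f.args.map Term.const⟩

/-- `C_{d,D}`: the ground denial constraints whose bodies are the `facts`-images of the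
conflicts of `D` w.r.t. `C` (all syntactic list representations are included). -/
def Cd (S : Schema) (D : DB) (C : Set UC) : Set UC :=
  {τ | τ.neg = [] ∧ τ.ineq = [] ∧
       ∃ E ∈ Conf S D C, {a | a ∈ τ.pos} = Fact.toAtom '' factsMap E}

/-! ### Refinements, subsumption, `min(C)` and `η^C` (AICs from denial constraints) -/

def Term.subst (σ : Var → Term) : Term → Term
  | .const c => .const c
  | .var v => σ v

def Atom.subst (σ : Var → Term) (a : Atom) : Atom := ⟨a.pred, a.args.map (Term.subst σ)⟩

/-- Constants occurring in a set of constraints. -/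
def constsOf (C : Set UC) : Set Const :=
  {c | ∃ τ ∈ C, (∃ a ∈ τ.pos, Term.const c ∈ a.args) ∨ (∃ a ∈ τ.neg, Term.const c ∈ a.args) ∨
       (∃ p ∈ τ.ineq, p.1 = Term.const c ∨ p.2 = Term.const c)}

/-- `τ'` is a refinement of `τ` w.r.t. the constant set `K`. -/
def isRefinement (K : Set Const) (τ τ' : UC) : Prop :=
  ∃ σ : Var → Term,
    (∀ v ∈ τ.vars, (∃ c ∈ K, σ v = Term.const c) ∨
                   (∃ w ∈ τ.vars, σ v = Term.var w ∧ σ w = Term.var w)) ∧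
    τ'.pos = τ.pos.map (Atom.subst σ) ∧ τ'.neg = [] ∧
    (∀ p : Term × Term, p ∈ τ'.ineq ↔
       ((∃ q ∈ τ.ineq, p = (Term.subst σ q.1, Term.subst σ q.2)) ∨
        (∃ w ∈ τ.vars, ∃ w' ∈ τ.vars, σ w = Term.var w ∧ σ w' = Term.var w' ∧ w ≠ w' ∧
           p = (Term.var w, Term.var w')) ∨
        (∃ w ∈ τ.vars, ∃ c ∈ K, σ w = Term.var w ∧ p = (Term.var w, Term.const c))))

def UC.terms (τ : UC) : Set Term :=
  {t | (∃ a ∈ τ.pos, t ∈ a.args) ∨ (∃ a ∈ τ.neg, t ∈ a.args) ∨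
       (∃ p ∈ τ.ineq, t = p.1 ∨ t = p.2)}

def Atom.mapT (h : Term → Term) (a : Atom) : Atom := ⟨a.pred, a.args.map h⟩

/-- `τ1` is subsumed by `τ2`. -/
def subsumes (τ2 τ1 : UC) : Prop :=
  ∃ h : Term → Term, Set.InjOn h τ2.terms ∧ (∀ c, h (Term.const c) = Term.const c) ∧
    Atom.mapT h '' {a | a ∈ τ2.pos} ⊂ {a | a ∈ τ1.pos}

def refinements (C : Set UC) : Set UC := {τ' | ∃ τ ∈ C, isRefinement (constsOf C) τ τ'}

def minC (C : Set UC) : Set UC :=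
  {τ' ∈ refinements C | ¬ ∃ τ'' ∈ refinements C, subsumes τ'' τ'}

def Atom.idTerm (a : Atom) : Term := a.args.headD (Term.const 0)

/-- `η^C`: the data-independent set of AICs built from `min(C)` and the priority predicate `p₀`. -/
def etaC (p₀ : ℕ) (C : Set UC) : Set AIC :=
  {r | ∃ τ ∈ minC C, ∃ i : Fin τ.pos.length,
        (∀ a ∈ τ.pos, a.args ≠ []) ∧
        r.pos = τ.pos ∧ r.ineq = τ.ineq ∧
        r.updPos = [τ.pos.get i] ∧ r.updNeg = [] ∧
        (∀ a : Atom, a ∈ r.neg ↔ ∃ j : Fin τ.pos.length, j ≠ i ∧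
            a = ⟨p₀, [(τ.pos.get i).idTerm, (τ.pos.get j).idTerm]⟩)}


lemma violation_of_ground {S : Schema} {r : AIC} (hwf : r.wf S)
    (ν : Var → Const) (I : DB)
    (hpos : ∀ a ∈ r.pos, a.ground ν ∈ I)
    (hneg : ∀ a ∈ r.neg, a.ground ν ∉ I)
    (hineq : ∀ p ∈ r.ineq, p.1.eval ν ≠ p.2.eval ν) :
    r.toUC.violation I ν := by
  obtain ⟨⟨-, -, hsn, hsi⟩, -, -, -⟩ := hwf
  refine ⟨?_, hpos, hneg, hineq⟩
  intro v hv
  have hb : ∃ b ∈ r.pos, v ∈ b.vars := by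
    rcases hv with ⟨a, ha, hva⟩ | ⟨a, ha, hva⟩ | ⟨p, hp, hvp⟩
    · exact ⟨a, ha, hva⟩
    · exact hsn a ha v hva
    · exact hsi p hp v hvp
  obtain ⟨b, hb1, hb2⟩ := hb
  exact ⟨b.ground ν, hpos b hb1, List.mem_map.mpr ⟨Term.var v, hb2, rfl⟩⟩

lemma mem_applyU {D : DB} {V : Set UAct} {f : Fact} :
    f ∈ applyU D V ↔ (f ∈ D ∧ UAct.del f ∉ V) ∨ UAct.add f ∈ V := Iff.rfl

/-- Proposition 6: an r-update `U` is grounded iff it is an r-update w.r.t. `η[U]`. -/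
theorem grounded_iff_rupdate_of_restriction
    (S : Schema) (η : Set AIC) (hη : ∀ r ∈ η, r.wf S)
    (D : DB) (hD : DBwf S D) :
    ∀ U ∈ UpsA D η,
      (GroundedA D η U ↔ U ∈ UpsG D (restrictG (grD D η) U)) := by
  intro U hU
  obtain ⟨hcons, hsat, hmin⟩ := hU
  constructor
  · rintro ⟨-, hgr⟩
    refine ⟨hcons, ?_, ?_⟩
    · rintro g' ⟨g0, hg0, rfl, -⟩ ⟨hpos, hneg⟩
      obtain ⟨r, hr, ν, hadom, hineq, rfl⟩ := hg0
      refine hsat r hr ⟨ν, violation_of_ground (hη r hr) ν _ ?_ ?_ hineq⟩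
      · intro a ha; exact hpos ⟨a, ha, rfl⟩
      · intro a ha; exact hneg _ ⟨a, ha, rfl⟩
    · intro V hV hsatG
      obtain ⟨g, hg, hnh, hupd⟩ := hgr V hV
      obtain ⟨g0, hg0, hcase⟩ := hg
      have hbody : g.pos ⊆ applyU D V ∧ ∀ f ∈ g.neg, f ∉ applyU D V := not_not.mp hnh
      rcases hcase with ⟨f, hf, rfl⟩ | ⟨f, hf, rfl⟩
      · have hdf : UAct.del f ∈ U \ V := hupd (Or.inl ⟨f, rfl, rfl⟩)
        exact hsatG ⟨g0.pos, g0.neg, {x | x ∈ g0.updPos ∧ UAct.del x ∈ U},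
            {x | x ∈ g0.updNeg ∧ UAct.add x ∈ U}⟩
          ⟨g0, hg0, rfl, ⟨UAct.del f, Or.inl ⟨f, ⟨hf, hdf.1⟩, rfl⟩⟩⟩ hbody
      · have haf : UAct.add f ∈ U \ V := hupd (Or.inr ⟨f, rfl, rfl⟩)
        exact hsatG ⟨g0.pos, g0.neg, {x | x ∈ g0.updPos ∧ UAct.del x ∈ U},
            {x | x ∈ g0.updNeg ∧ UAct.add x ∈ U}⟩
          ⟨g0, hg0, rfl, ⟨UAct.add f, Or.inr ⟨f, ⟨hf, haf.1⟩, rfl⟩⟩⟩ hbody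
  · rintro ⟨-, -, hm'⟩
    refine ⟨⟨hcons, hsat, hmin⟩, ?_⟩
    intro V hV
    have hVU : V ⊆ U := hV.subset
    have hconsV : consistentU V := fun ⟨f, h1, h2⟩ => hcons ⟨f, hVU h1, hVU h2⟩
    have hex : ∃ g' ∈ restrictG (grD D η) U, ¬ g'.holds (applyU D V) := by
      by_contra h
      push_neg at h
      exact hm' V hV h
    obtain ⟨g', hg', hnh⟩ := hex
    obtain ⟨g0, hg0, rfl, hne⟩ := hg'
    have hbody : g0.pos ⊆ applyU D V ∧ ∀ f ∈ g0.neg, f ∉ applyU D V := not_not.mp hnh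
    have hsub : g0.updPos ⊆ g0.pos ∧ g0.updNeg ⊆ g0.neg := by
      obtain ⟨r, hr, ν, -, -, rfl⟩ := hg0
      constructor
      · rintro x ⟨a, ha, rfl⟩; exact ⟨a, (hη r hr).2.1 a ha, rfl⟩
      · rintro x ⟨a, ha, rfl⟩; exact ⟨a, (hη r hr).2.2.1 a ha, rfl⟩
    obtain ⟨A, hA⟩ := hne
    rcases hA with ⟨f, ⟨hfP, hfU⟩, rfl⟩ | ⟨f, ⟨hfN, hfU⟩, rfl⟩
    · have hfV : UAct.del f ∉ V := by
        intro hdel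
        have hfin : f ∈ applyU D V := hbody.1 (hsub.1 hfP)
        rcases mem_applyU.mp hfin with ⟨-, h2⟩ | h3
        · exact h2 hdel
        · exact hconsV ⟨f, h3, hdel⟩
      refine ⟨⟨g0.pos, g0.neg, {f}, ∅⟩, ⟨g0, hg0, Or.inl ⟨f, hfP, rfl⟩⟩,
        fun h => h hbody, ?_⟩
      rintro A (⟨x, hx, rfl⟩ | ⟨x, hx, rfl⟩)
      · cases hx; exact ⟨hfU, hfV⟩
      · exact absurd hx (Set.notMem_empty x)
    · have hfV : UAct.add f ∉ V := by
        intro hadd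
        exact hbody.2 f (hsub.2 hfN) (Or.inr hadd)
      refine ⟨⟨g0.pos, g0.neg, ∅, {f}⟩, ⟨g0, hg0, Or.inr ⟨f, hfN, rfl⟩⟩,
        fun h => h hbody, ?_⟩
      rintro A (⟨x, hx, rfl⟩ | ⟨x, hx, rfl⟩)
      · exact absurd hx (Set.notMem_empty x)
      · cases hx; exact ⟨hfU, hfV⟩

end PR
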